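/- For 0 < q < 1 and a > 0, the weights w_s = (−a·q²; q²)_s · q^s / (q²; q²)_s are strictly positive for all s ∈ ℕ, the series ∑_{s≥0} w_s converges absolutely, and its sum equals (−a·q³; q²)_∞/(q; q²)_∞. -/

import Mathlib

open Finset

/-- finite q-shifted factorial `(z; p)_s = ∏_{j=0}^{s-1} (1 - z p^j)` -/
noncomputable def qPoch (z p : ℝ) (s : ℕ) : ℝ := ∏ j ∈ Finset.range s, (1 - z * p ^ j)

/-- infinite q-shifted factorial `(z; p)_∞ = ∏_{j=0}^{∞} (1 - z p^j)` -/
noncomputable def qPochInf (z p : ℝ) : ℝ := ∏' j : ℕ, (1 - z * p ^ j)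

open Filter Topology Real

lemma factor_pos {z p : ℝ} (hz1 : z < 1) (hp0 : 0 ≤ p) (hp1 : p ≤ 1) (j : ℕ) :
    0 < 1 - z * p ^ j := by
  rcases le_or_gt z 0 with h | h
  · nlinarith [pow_nonneg hp0 j]
  · nlinarith [pow_le_one₀ hp0 hp1 (n := j), pow_nonneg hp0 j]

lemma qPoch_pos {z p : ℝ} (hz1 : z < 1) (hp0 : 0 ≤ p) (hp1 : p ≤ 1) (s : ℕ) :
    0 < qPoch z p s :=
  Finset.prod_pos fun j _ => factor_pos hz1 hp0 hp1 j

lemma summable_log_aux {z p : ℝ} (hz1 : z < 1) (hp0 : 0 ≤ p) (hp1 : p < 1) :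
    Summable fun j : ℕ => Real.log (1 - z * p ^ j) := by
  obtain ⟨C, hC⟩ : ∃ C : ℝ, ∀ j : ℕ, |Real.log (1 - z * p ^ j)| ≤ C * p ^ j := by
    rcases le_or_gt z 0 with h | h
    · refine ⟨-z, fun j => ?_⟩
      have h1 : (1:ℝ) ≤ 1 - z * p ^ j := by nlinarith [pow_nonneg hp0 j]
      rw [abs_of_nonneg (Real.log_nonneg h1)]
      have := Real.log_le_sub_one_of_pos (show (0:ℝ) < 1 - z * p ^ j by linarith)
      linarith
    · refine ⟨z / (1 - z), fun j => ?_⟩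
      have hxz : z * p ^ j ≤ z :=
        mul_le_of_le_one_right h.le (pow_le_one₀ hp0 hp1.le)
      have hx0 : 0 ≤ z * p ^ j := by positivity
      have h1 : 0 < 1 - z * p ^ j := by linarith
      have hle : Real.log (1 - z * p ^ j) ≤ 0 :=
        Real.log_nonpos (by linarith) (by linarith)
      rw [abs_of_nonpos hle]
      have h2 : -Real.log (1 - z * p ^ j) = Real.log (1 - z * p ^ j)⁻¹ := by
        rw [Real.log_inv]
      have h3 : Real.log (1 - z * p ^ j)⁻¹ ≤ (1 - z * p ^ j)⁻¹ - 1 :=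
        Real.log_le_sub_one_of_pos (by positivity)
      have h4 : (1 - z * p ^ j)⁻¹ - 1 = (z * p ^ j) / (1 - z * p ^ j) := by
        field_simp
        ring
      have h5 : (z * p ^ j) / (1 - z * p ^ j) ≤ (z * p ^ j) / (1 - z) :=
        div_le_div_of_nonneg_left hx0 (by linarith) (by linarith)
      have h6 : (z * p ^ j) / (1 - z) = z / (1 - z) * p ^ j := by ring
      linarith [h2, h3, h4 ▸ h3, h5, h6 ▸ h5]
  have hgeo : Summable fun j : ℕ => C * p ^ j :=
    (summable_geometric_of_lt_one hp0 hp1).mul_left C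
  exact Summable.of_abs (Summable.of_nonneg_of_le (fun j => abs_nonneg _) hC hgeo)

lemma hasProd_aux {z p : ℝ} (hz1 : z < 1) (hp0 : 0 ≤ p) (hp1 : p < 1) :
    HasProd (fun j : ℕ => 1 - z * p ^ j)
      (Real.exp (∑' j : ℕ, Real.log (1 - z * p ^ j))) := by
  have hs := (summable_log_aux hz1 hp0 hp1).hasSum
  have h2 : (Real.exp ∘ fun j : ℕ => Real.log (1 - z * p ^ j)) =
      fun j : ℕ => 1 - z * p ^ j := by
    funext j; exact Real.exp_log (factor_pos hz1 hp0 hp1.le j)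
  have := hs.rexp
  rwa [h2] at this

lemma qPochInf_pos {z p : ℝ} (hz1 : z < 1) (hp0 : 0 ≤ p) (hp1 : p < 1) :
    0 < qPochInf z p := by
  rw [qPochInf, (hasProd_aux hz1 hp0 hp1).tprod_eq]
  exact Real.exp_pos _

lemma tendsto_prod_aux {z p : ℝ} (hz1 : z < 1) (hp0 : 0 ≤ p) (hp1 : p < 1) :
    Tendsto (fun N : ℕ => ∏ j ∈ Finset.range N, (1 - z * p ^ j)) atTop
      (𝓝 (qPochInf z p)) := by
  have h := (hasProd_aux hz1 hp0 hp1).multipliable.hasProd.tendsto_prod_nat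
  exact h

theorem qGaussAux (p b z : ℝ) (hp0 : 0 < p) (hp1 : p < 1) (hb : b ≤ 0)
    (hz0 : 0 < z) (hz1 : z < 1) :
    Summable (fun s : ℕ => qPoch b p s / qPoch p p s * z ^ s) ∧
    (∑' s : ℕ, qPoch b p s / qPoch p p s * z ^ s) * qPochInf z p = qPochInf (b * z) p := by
  set c : ℕ → ℝ := fun s => qPoch b p s / qPoch p p s with hc
  have hppos : ∀ s, 0 < qPoch p p s := qPoch_pos hp1 hp0.le hp1.le
  have hbpos : ∀ s, 0 < qPoch b p s := qPoch_pos (by linarith) hp0.le hp1.le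
  have hcpos : ∀ s, 0 < c s := fun s => div_pos (hbpos s) (hppos s)
  have hc0 : c 0 = 1 := by simp [hc, qPoch]
  have hdenpos : ∀ s : ℕ, 0 < 1 - p * p ^ s := by
    intro s
    nlinarith [pow_le_one₀ hp0.le hp1.le (n := s), pow_pos hp0 s]
  have hrec : ∀ s, c (s + 1) * (1 - p * p ^ s) = c s * (1 - b * p ^ s) := by
    intro s
    have h1 : qPoch b p (s + 1) = qPoch b p s * (1 - b * p ^ s) :=
      Finset.prod_range_succ _ _
    have h2 : qPoch p p (s + 1) = qPoch p p s * (1 - p * p ^ s) :=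
      Finset.prod_range_succ _ _
    have hne : qPoch p p s ≠ 0 := (hppos s).ne'
    have hne2 : (1 - p * p ^ s) ≠ 0 := (hdenpos s).ne'
    simp only [hc, h1, h2]
    rw [← div_div, div_mul_cancel₀ _ hne2]
    ring
  -- summability
  have hsum : ∀ x : ℝ, 0 ≤ x → x < 1 → Summable fun s : ℕ => c s * x ^ s := by
    intro x hx0 hx1
    have hrat : Tendsto (fun s : ℕ => x * (1 - b * p ^ s) / (1 - p * p ^ s)) atTop (𝓝 x) := by
      have hp' : Tendsto (fun s : ℕ => p ^ s) atTop (𝓝 0) :=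
        tendsto_pow_atTop_nhds_zero_of_lt_one hp0.le hp1
      have hcont : ContinuousAt (fun t : ℝ => x * (1 - b * t) / (1 - p * t)) 0 :=
        ContinuousAt.div (by fun_prop) (by fun_prop) (by norm_num)
      have := hcont.tendsto.comp hp'
      simpa [Function.comp_def] using this
    have hev : ∀ᶠ s in atTop,
        ‖c (s + 1) * x ^ (s + 1)‖ ≤ (1 + x) / 2 * ‖c s * x ^ s‖ := by
      filter_upwards [hrat.eventually_le_const (show x < (1 + x) / 2 by linarith)] with s hs
      have hden := hdenpos s
      have h2 : c (s + 1) * x ^ (s + 1) =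
          (c s * x ^ s) * (x * (1 - b * p ^ s) / (1 - p * p ^ s)) := by
        rw [← mul_div_assoc, eq_div_iff hden.ne']
        linear_combination x ^ (s + 1) * hrec s
      have hterm0 : (0:ℝ) ≤ c s * x ^ s := mul_nonneg (hcpos s).le (pow_nonneg hx0 s)
      have key : c (s + 1) * x ^ (s + 1) ≤ (1 + x) / 2 * (c s * x ^ s) := by
        rw [h2, mul_comm ((1 + x) / 2)]
        exact mul_le_mul_of_nonneg_left hs hterm0
      have hterm1 : (0:ℝ) ≤ c (s + 1) * x ^ (s + 1) := mul_nonneg (hcpos _).le (pow_nonneg hx0 _)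
      rw [Real.norm_eq_abs, Real.norm_eq_abs, abs_of_nonneg hterm1, abs_of_nonneg hterm0]
      exact key
    exact summable_of_ratio_norm_eventually_le (by linarith) hev
  refine ⟨hsum z hz0.le hz1, ?_⟩
  -- functional equation
  have hfe : ∀ x : ℝ, 0 ≤ x → x < 1 →
      (1 - x) * ∑' s : ℕ, c s * x ^ s = (1 - b * x) * ∑' s : ℕ, c s * (p * x) ^ s := by
    intro x hx0 hx1
    have hpx0 : 0 ≤ p * x := by positivity
    have hpx1 : p * x < 1 := by nlinarith
    have S1 := hsum x hx0 hx1
    have S2 := hsum (p * x) hpx0 hpx1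
    have S1' : Summable fun s : ℕ => c (s + 1) * x ^ (s + 1) :=
      (summable_nat_add_iff (f := fun s : ℕ => c s * x ^ s) 1).2 S1
    have S2' : Summable fun s : ℕ => c (s + 1) * (p * x) ^ (s + 1) :=
      (summable_nat_add_iff (f := fun s : ℕ => c s * (p * x) ^ s) 1).2 S2
    have S1'' : Summable fun s : ℕ => c s * x ^ (s + 1) :=
      (S1.mul_left x).congr fun s => by ring
    have S2'' : Summable fun s : ℕ => b * c s * p ^ s * x ^ (s + 1) :=
      (S2.mul_left (b * x)).congr fun s => by ring
    have E1 : ∑' s : ℕ, c s * x ^ s = 1 + ∑' s : ℕ, c (s + 1) * x ^ (s + 1) := by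
      rw [Summable.tsum_eq_zero_add S1, hc0]; norm_num
    have E2 : x * ∑' s : ℕ, c s * x ^ s = ∑' s : ℕ, c s * x ^ (s + 1) := by
      rw [← tsum_mul_left]; exact tsum_congr fun s => by ring
    have E3 : ∑' s : ℕ, c s * (p * x) ^ s
        = 1 + ∑' s : ℕ, c (s + 1) * (p * x) ^ (s + 1) := by
      rw [Summable.tsum_eq_zero_add S2, hc0]; norm_num
    have E4 : b * x * ∑' s : ℕ, c s * (p * x) ^ s
        = ∑' s : ℕ, b * c s * p ^ s * x ^ (s + 1) := by
      rw [← tsum_mul_left]; exact tsum_congr fun s => by ring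
    have key : (∑' s : ℕ, c (s + 1) * x ^ (s + 1)) - (∑' s : ℕ, c s * x ^ (s + 1)) =
        (∑' s : ℕ, c (s + 1) * (p * x) ^ (s + 1))
          - (∑' s : ℕ, b * c s * p ^ s * x ^ (s + 1)) := by
      rw [← Summable.tsum_sub S1' S1'', ← Summable.tsum_sub S2' S2'']
      exact tsum_congr fun s => by linear_combination x ^ (s + 1) * hrec s
    have L1 : (1 - x) * ∑' s : ℕ, c s * x ^ s
        = (∑' s : ℕ, c s * x ^ s) - x * ∑' s : ℕ, c s * x ^ s := by ring
    have L2 : (1 - b * x) * ∑' s : ℕ, c s * (p * x) ^ s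
        = (∑' s : ℕ, c s * (p * x) ^ s) - b * x * ∑' s : ℕ, c s * (p * x) ^ s := by ring
    linarith [key, E1, E2, E3, E4, L1, L2]
  -- iteration
  have hxN0 : ∀ N : ℕ, 0 ≤ p ^ N * z := fun N => by positivity
  have hxN1 : ∀ N : ℕ, p ^ N * z < 1 := by
    intro N
    nlinarith [pow_le_one₀ hp0.le hp1.le (n := N), pow_pos hp0 N]
  have hiter : ∀ N : ℕ, (∑' s : ℕ, c s * z ^ s) * (∏ j ∈ Finset.range N, (1 - z * p ^ j)) =
      (∏ j ∈ Finset.range N, (1 - b * z * p ^ j)) * ∑' s : ℕ, c s * (p ^ N * z) ^ s := by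
    intro N
    induction N with
    | zero => simp
    | succ N IH =>
      rw [Finset.prod_range_succ, Finset.prod_range_succ]
      have hfeN := hfe (p ^ N * z) (hxN0 N) (hxN1 N)
      have hxeq : p * (p ^ N * z) = p ^ (N + 1) * z := by ring
      simp only [hxeq] at hfeN
      linear_combination (1 - z * p ^ N) * IH +
        (∏ j ∈ Finset.range N, (1 - b * z * p ^ j)) * hfeN
  -- limits
  have hbz1 : b * z < 1 := by nlinarith
  have hPtend := tendsto_prod_aux hz1 hp0.le hp1 (z := z)
  have hQtend := tendsto_prod_aux hbz1 hp0.le hp1 (z := b * z)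
  have hQtend' : Tendsto (fun N : ℕ => ∏ j ∈ Finset.range N, (1 - b * z * p ^ j)) atTop
      (𝓝 (qPochInf (b * z) p)) := hQtend
  -- tail tends to 1
  have Ssum : Summable fun s : ℕ => c (s + 1) * z ^ s := by
    have h := (summable_nat_add_iff (f := fun s : ℕ => c s * z ^ s) 1).2 (hsum z hz0.le hz1)
    have := h.mul_left z⁻¹
    exact this.congr fun s => by
      field_simp
      ring
  have htail : Tendsto (fun N : ℕ => ∑' s : ℕ, c s * (p ^ N * z) ^ s) atTop (𝓝 1) := by
    set S : ℝ := ∑' s : ℕ, c (s + 1) * z ^ s with hS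
    have hbound : ∀ N : ℕ, ‖(∑' s : ℕ, c s * (p ^ N * z) ^ s) - 1‖ ≤ p ^ N * (z * S) := by
      intro N
      set x := p ^ N * z with hx
      have hx0 := hxN0 N
      have hx1 := hxN1 N
      have hxz : x ≤ z := by
        rw [hx]
        nlinarith [pow_le_one₀ hp0.le hp1.le (n := N), pow_pos hp0 N]
      have SX : Summable fun s : ℕ => c (s + 1) * x ^ (s + 1) :=
        (summable_nat_add_iff (f := fun s : ℕ => c s * x ^ s) 1).2 (hsum x hx0 hx1)
      have E1 : (∑' s : ℕ, c s * x ^ s) - 1 = ∑' s : ℕ, c (s + 1) * x ^ (s + 1) := by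
        rw [Summable.tsum_eq_zero_add (hsum x hx0 hx1), hc0]; norm_num
      have hle : ∀ s : ℕ, c (s + 1) * x ^ (s + 1) ≤ x * (c (s + 1) * z ^ s) := by
        intro s
        have h1 : x ^ (s + 1) = x * x ^ s := by ring
        have h2 : x ^ s ≤ z ^ s := pow_le_pow_left₀ hx0 hxz s
        have := (hcpos (s + 1)).le
        nlinarith [pow_nonneg hx0 s, mul_le_mul_of_nonneg_left h2 (hcpos (s+1)).le,
          mul_nonneg (hcpos (s+1)).le (pow_nonneg hx0 s)]
      have htsle : ∑' s : ℕ, c (s + 1) * x ^ (s + 1) ≤ ∑' s : ℕ, x * (c (s + 1) * z ^ s) :=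
        Summable.tsum_le_tsum hle SX (Ssum.mul_left x)
      have hts2 : ∑' s : ℕ, x * (c (s + 1) * z ^ s) = x * S := tsum_mul_left
      have hnn : 0 ≤ ∑' s : ℕ, c (s + 1) * x ^ (s + 1) :=
        tsum_nonneg fun s => mul_nonneg (hcpos _).le (pow_nonneg hx0 _)
      rw [E1, Real.norm_eq_abs, abs_of_nonneg hnn]
      calc ∑' s : ℕ, c (s + 1) * x ^ (s + 1) ≤ x * S := by rw [← hts2]; exact htsle
        _ = p ^ N * (z * S) := by rw [hx]; ring
    have hgeo : Tendsto (fun N : ℕ => p ^ N * (z * S)) atTop (𝓝 0) := by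
      have := (tendsto_pow_atTop_nhds_zero_of_lt_one hp0.le hp1).mul_const (z * S)
      simpa using this
    have h0 := squeeze_zero_norm hbound hgeo
    have := h0.add_const 1
    simpa using this
  -- combine
  have hL : Tendsto (fun N : ℕ => (∑' s : ℕ, c s * z ^ s) *
      ∏ j ∈ Finset.range N, (1 - z * p ^ j)) atTop
      (𝓝 ((∑' s : ℕ, c s * z ^ s) * qPochInf z p)) :=
    hPtend.const_mul _
  have hR : Tendsto (fun N : ℕ => (∏ j ∈ Finset.range N, (1 - b * z * p ^ j)) *
      ∑' s : ℕ, c s * (p ^ N * z) ^ s) atTop (𝓝 (qPochInf (b * z) p * 1)) :=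
    hQtend'.mul htail
  have hL' : Tendsto (fun N : ℕ => (∑' s : ℕ, c s * z ^ s) *
      ∏ j ∈ Finset.range N, (1 - z * p ^ j)) atTop (𝓝 (qPochInf (b * z) p * 1)) := by
    refine hR.congr fun N => (hiter N).symm
  have := tendsto_nhds_unique hL hL'
  rw [this, mul_one]

theorem stmt17 (q a : ℝ) (hq : 0 < q) (hq1 : q < 1) (ha : 0 < a)
    (w : ℕ → ℝ)
    (hw : ∀ s, w s = qPoch (-(a * q ^ 2)) (q ^ 2) s * q ^ s / qPoch (q ^ 2) (q ^ 2) s) :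
    (∀ s : ℕ, 0 < w s) ∧ Summable (fun s => |w s|) ∧
    ∑' s : ℕ, w s = qPochInf (-(a * q ^ 3)) (q ^ 2) / qPochInf q (q ^ 2) := by
  have hp0 : (0:ℝ) < q ^ 2 := by positivity
  have hp1 : q ^ 2 < 1 := by nlinarith
  have hb : -(a * q ^ 2) ≤ 0 := by nlinarith
  obtain ⟨hS, hEq⟩ := qGaussAux (q ^ 2) (-(a * q ^ 2)) q hp0 hp1 hb hq hq1
  have hw' : w = fun s : ℕ => qPoch (-(a * q ^ 2)) (q ^ 2) s / qPoch (q ^ 2) (q ^ 2) s * q ^ s := by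
    funext s; rw [hw s]; ring
  have hwpos : ∀ s : ℕ, 0 < w s := by
    intro s
    rw [hw s]
    have h1 := qPoch_pos (show -(a * q ^ 2) < 1 by nlinarith) hp0.le hp1.le s
    have h2 := qPoch_pos hp1 hp0.le hp1.le s
    positivity
  refine ⟨hwpos, ?_, ?_⟩
  · rw [summable_abs_iff, hw']
    exact hS
  · have hbz : -(a * q ^ 2) * q = -(a * q ^ 3) := by ring
    rw [hbz] at hEq
    have hPpos : 0 < qPochInf q (q ^ 2) := qPochInf_pos hq1 hp0.le hp1
    rw [hw', eq_div_iff hPpos.ne']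
    exact hEq
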